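/- Let nonnegative reals a_t (t = 0,...,τ-1) satisfy, for each t ≤ τ-1, a_t ≤ 2A + 2B + 4η²L²t(∑_{t'=0}^{t-1} a_{t'} + σ²), where A, B, σ² ≥ 0, η, L > 0. If ηLE ≤ 1/2 and τ ≤ E, then ∑_{t=0}^{τ-1} a_t ≤ 4τA + 4τB + σ². -/

import Mathlib

/-!
Every partial sum is at most the full sum `S`, so summing the recursion over `t < τ` and using
`∑_{t<τ} t ≤ τ² / 2` gives `S ≤ τ α + (β τ² / 2) (S + σ²)`. When `β τ² ≤ 1` the coefficient of `S`
is at most `1 / 2`, and the term can be absorbed into the left-hand side.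
-/

open Finset

lemma sum_range_natCast_le_sq_div_two (n : ℕ) :
    ∑ t ∈ range n, (t : ℝ) ≤ (n : ℝ) ^ 2 / 2 := by
  induction n with
  | zero => simp
  | succ n ih =>
    rw [sum_range_succ]
    push_cast
    nlinarith

lemma le_two_mul_add_of_le_add_mul {S b c s : ℝ} (hc : c ≤ 1 / 2) (hSs : 0 ≤ S + s)
    (h : S ≤ b + c * (S + s)) : S ≤ 2 * b + s := by
  nlinarith [mul_le_mul_of_nonneg_right hc hSs]

theorem sum_range_le_of_le_partial_sums {a : ℕ → ℝ} {τ : ℕ} {α β s : ℝ}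
    (ha : ∀ t, 0 ≤ a t) (hβ : 0 ≤ β) (hs : 0 ≤ s) (hβτ : β * τ ^ 2 ≤ 1)
    (hrec : ∀ t < τ, a t ≤ α + β * t * ((∑ t' ∈ range t, a t') + s)) :
    ∑ t ∈ range τ, a t ≤ 2 * (τ * α) + s := by
  set S := ∑ t ∈ range τ, a t
  have hSs : 0 ≤ S + s := add_nonneg (sum_nonneg fun t _ => ha t) hs
  have hterm : ∀ t ∈ range τ, a t ≤ α + β * (S + s) * t := by
    intro t ht
    have ht := mem_range.1 ht
    have hpartial : ∑ t' ∈ range t, a t' ≤ S :=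
      sum_le_sum_of_subset_of_nonneg (range_subset_range.2 ht.le) fun i _ _ => ha i
    calc a t ≤ α + β * t * ((∑ t' ∈ range t, a t') + s) := hrec t ht
      _ ≤ α + β * t * (S + s) := by gcongr
      _ = α + β * (S + s) * t := by ring
  refine le_two_mul_add_of_le_add_mul (c := β * τ ^ 2 / 2) (by linarith) hSs ?_
  calc S ≤ ∑ t ∈ range τ, (α + β * (S + s) * t) := sum_le_sum hterm
    _ = τ * α + β * (S + s) * ∑ t ∈ range τ, (t : ℝ) := by
      rw [sum_add_distrib, sum_const, card_range, nsmul_eq_mul, mul_sum]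
    _ ≤ τ * α + β * (S + s) * ((τ : ℝ) ^ 2 / 2) := by
      gcongr
      exact sum_range_natCast_le_sq_div_two τ
    _ = τ * α + β * τ ^ 2 / 2 * (S + s) := by ring

theorem recursive_sum_bound_general (τ E : ℕ) (hτE : τ ≤ E)
    (a : ℕ → ℝ) (ha : ∀ t, 0 ≤ a t)
    (A B σ2 η L : ℝ) (hσ2 : 0 ≤ σ2)
    (hη : 0 < η) (hL : 0 < L) (hηLE : η * L * E ≤ 1 / 2)
    (hrec : ∀ t < τ,
      a t ≤ 2 * A + 2 * B
        + 4 * η ^ 2 * L ^ 2 * t * ((∑ t' ∈ Finset.range t, a t') + σ2)) :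
    ∑ t ∈ Finset.range τ, a t ≤ 4 * τ * A + 4 * τ * B + σ2 := by
  have hηLτ : η * L * τ ≤ 1 / 2 :=
    le_trans (by gcongr) hηLE
  have hβτ : 4 * η ^ 2 * L ^ 2 * (τ : ℝ) ^ 2 ≤ 1 := by
    have hηLτ_nonneg : 0 ≤ η * L * τ := by positivity
    nlinarith [mul_le_mul hηLτ hηLτ hηLτ_nonneg (by norm_num : (0 : ℝ) ≤ 1 / 2)]
  calc ∑ t ∈ Finset.range τ, a t ≤ 2 * (τ * (2 * A + 2 * B)) + σ2 :=
        sum_range_le_of_le_partial_sums ha (by positivity) hσ2 hβτ hrec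
    _ = 4 * τ * A + 4 * τ * B + σ2 := by ring

theorem recursive_sum_bound (τ E : ℕ) (hτE : τ ≤ E)
    (a : ℕ → ℝ) (ha : ∀ t, 0 ≤ a t)
    (A B σ2 η L : ℝ) (hA : 0 ≤ A) (hB : 0 ≤ B) (hσ2 : 0 ≤ σ2)
    (hη : 0 < η) (hL : 0 < L) (hηLE : η * L * E ≤ 1 / 2)
    (hrec : ∀ t < τ,
      a t ≤ 2 * A + 2 * B
        + 4 * η ^ 2 * L ^ 2 * t * ((∑ t' ∈ Finset.range t, a t') + σ2)) :
    ∑ t ∈ Finset.range τ, a t ≤ 4 * τ * A + 4 * τ * B + σ2 :=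
  recursive_sum_bound_general τ E hτE a ha A B σ2 η L hσ2 hη hL hηLE hrec
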